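/- arXiv:1505.03582 — 2 statements merged into one kernel-verified Lean document; each statement's English description precedes it below -/
import Mathlib

section
/- The Klein bottle group ℤ ⋊₋₁ ℤ is an amalgamated free product ℤ *_ℤ ℤ, where each copy of ℤ contains the amalgamated ℤ as its index-2 subgroup. -/
/-!
In any group, pairs `(d, u)` with `d² = u²` correspond to pairs `(x, d)` with `d x d⁻¹ = x⁻¹`,
via `x = u d⁻¹` and `u = x d`. Homomorphisms out of `ℤ *_ℤ ℤ` are exactly the former and
homomorphisms out of `ℤ ⋊₋₁ ℤ` exactly the latter, so the two universal properties give mutually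
inverse maps. The index statement is `[ℤ : 2ℤ] = 2`.
-/

/-- The action of ℤ on ℤ by negation (multiplicatively: inversion). -/
def negAction : Multiplicative ℤ →* MulAut (Multiplicative ℤ) :=
  zpowersHom _ (MulEquiv.inv (Multiplicative ℤ))

/-- The Klein bottle group ℤ ⋊₋₁ ℤ. -/
abbrev KleinGroup : Type := Multiplicative ℤ ⋊[negAction] Multiplicative ℤ

/-- The inclusion of ℤ into a copy of ℤ as the index-2 subgroup (x ↦ x²). -/
def doubling : Multiplicative ℤ →* Multiplicative ℤ := powMonoidHom 2

open Multiplicative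

theorem range_doubling : doubling.range = (AddSubgroup.zmultiples (2 : ℤ)).toSubgroup := by
  ext c
  simp only [MonoidHom.mem_range, mem_toSubgroup, Int.mem_zmultiples_iff]
  constructor
  · rintro ⟨y, rfl⟩
    exact ⟨y.toAdd, by simp [doubling]⟩
  · rintro ⟨k, hk⟩
    exact ⟨ofAdd k, toAdd.injective (by simp [doubling, hk, mul_comm])⟩

theorem index_range_doubling : doubling.range.index = 2 := by
  rw [range_doubling, AddSubgroup.index_toSubgroup, Int.index_zmultiples]
  rfl

theorem Function.Semiconj.mulAut_zpow {A B : Type*} [Mul A] [Mul B] {f : A → B}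
    {σ : MulAut A} {τ : MulAut B} (h : Function.Semiconj f σ τ) (k : ℤ) :
    Function.Semiconj f ⇑(σ ^ k) ⇑(τ ^ k) := by
  induction k using Int.induction_on with
  | zero => exact Function.Semiconj.id_right
  | succ k ih => simpa only [zpow_add_one, MulAut.coe_mul] using ih.comp_right h
  | pred k ih =>
    simpa only [zpow_sub_one, MulAut.coe_mul, MulAut.inv_def] using
      ih.comp_right (h.inverses_right σ.apply_symm_apply τ.symm_apply_apply)

section

variable {G : Type*} [Group G]

theorem conj_mul_inv_eq_inv_of_mul_self_eq {d u : G} (h : d * d = u * u) :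
    d * (u * d⁻¹) * d⁻¹ = (u * d⁻¹)⁻¹ :=
  calc d * (u * d⁻¹) * d⁻¹ = d * u * (d * d)⁻¹ := by group
    _ = d * u * (u * u)⁻¹ := by rw [h]
    _ = (u * d⁻¹)⁻¹ := by group

theorem mul_self_eq_of_conj_eq_inv {x d : G} (h : d * x * d⁻¹ = x⁻¹) :
    d * d = x * d * (x * d) :=
  calc d * d = x * (x⁻¹ * d) * d := by group
    _ = x * (d * x * d⁻¹ * d) * d := by rw [h]
    _ = x * d * (x * d) := by group

end

namespace KleinGroup

variable {G : Type*} [Group G]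

def a : KleinGroup := SemidirectProduct.inl (ofAdd 1)

def b : KleinGroup := SemidirectProduct.inr (ofAdd 1)

theorem b_mul_a_mul_b_inv : b * a * b⁻¹ = a⁻¹ := by
  rw [a, b, ← map_inv SemidirectProduct.inr, ← SemidirectProduct.inl_aut, ← map_inv]
  rfl

theorem hom_ext {f g : KleinGroup →* G} (ha : f a = g a) (hb : f b = g b) : f = g :=
  SemidirectProduct.hom_ext (MonoidHom.ext_mint ha) (MonoidHom.ext_mint hb)

def lift (x d : G) (h : d * x * d⁻¹ = x⁻¹) : KleinGroup →* G :=
  SemidirectProduct.lift (zpowersHom G x) (zpowersHom G d) fun g => by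
    have hx : Function.Semiconj (zpowersHom G x) (MulEquiv.inv _) (MulAut.conj d) := fun n => by
      simp only [MulEquiv.inv_apply, zpowersHom_apply, toAdd_inv, zpow_neg, MulAut.conj_apply]
      rw [← conj_zpow, h, inv_zpow]
    -- `negAction g` and `MulAut.conj (d ^ g)` are the `g`-th powers of `inv` and `MulAut.conj d`.
    refine MonoidHom.ext fun n => ?_
    simpa [negAction, map_zpow] using hx.mulAut_zpow g.toAdd n

@[simp]
theorem lift_a (x d : G) (h : d * x * d⁻¹ = x⁻¹) : lift x d h a = x := by
  simp [lift, a]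

@[simp]
theorem lift_b (x d : G) (h : d * x * d⁻¹ = x⁻¹) : lift x d h b = d := by
  simp [lift, b]

end KleinGroup

abbrev DoublingPushout : Type := Monoid.PushoutI fun _ : Bool => doubling

namespace DoublingPushout

variable {G : Type*} [Group G]

def d : DoublingPushout := Monoid.PushoutI.of false (ofAdd 1)

def u : DoublingPushout := Monoid.PushoutI.of true (ofAdd 1)

theorem d_mul_d_eq_u_mul_u : d * d = u * u := by
  have h (i : Bool) :
      (Monoid.PushoutI.of i (ofAdd 1) * Monoid.PushoutI.of i (ofAdd 1) : DoublingPushout) =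
        Monoid.PushoutI.base _ (ofAdd 1) := by
    rw [← map_mul, ← Monoid.PushoutI.of_apply_eq_base _ i]
    rfl
  exact (h false).trans (h true).symm

theorem hom_ext {f g : DoublingPushout →* G} (hd : f d = g d) (hu : f u = g u) : f = g :=
  Monoid.PushoutI.hom_ext_nonempty fun i => MonoidHom.ext_mint (by cases i; exacts [hd, hu])

def lift (d u : G) (h : d * d = u * u) : DoublingPushout →* G :=
  Monoid.PushoutI.lift (fun i => zpowersHom G (bif i then u else d)) (zpowersHom G (d * d))
    fun i => MonoidHom.ext_mint <| by cases i <;> simp [doubling, pow_two, h]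

@[simp]
theorem lift_d (d u : G) (h : d * d = u * u) : lift d u h DoublingPushout.d = d := by
  simp [lift, DoublingPushout.d]

@[simp]
theorem lift_u (d u : G) (h : d * d = u * u) : lift d u h DoublingPushout.u = u := by
  simp [lift, DoublingPushout.u]

end DoublingPushout

open KleinGroup DoublingPushout

def KleinGroup.toDoublingPushout : KleinGroup →* DoublingPushout :=
  KleinGroup.lift (u * d⁻¹) d (conj_mul_inv_eq_inv_of_mul_self_eq d_mul_d_eq_u_mul_u)

def DoublingPushout.toKleinGroup : DoublingPushout →* KleinGroup :=
  DoublingPushout.lift b (a * b) (mul_self_eq_of_conj_eq_inv b_mul_a_mul_b_inv)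

/-- The Klein bottle group ℤ ⋊₋₁ ℤ is the amalgamated free product ℤ *_ℤ ℤ,
where each copy of ℤ contains the amalgamated ℤ as its index-2 subgroup. -/
theorem klein_iso_amalgamatedProduct :
    doubling.range.index = 2 ∧
    Nonempty (KleinGroup ≃* Monoid.PushoutI (fun _ : Bool => doubling)) :=
  ⟨index_range_doubling,
    ⟨MonoidHom.toMulEquiv toDoublingPushout toKleinGroup
      (KleinGroup.hom_ext (by simp [toDoublingPushout, toKleinGroup])
        (by simp [toDoublingPushout, toKleinGroup]))
      (DoublingPushout.hom_ext (by simp [toDoublingPushout, toKleinGroup])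
        (by simp [toDoublingPushout, toKleinGroup]))⟩⟩
end

section
/- The wallpaper group [p2] = ℤ² ⋊ (ℤ/2ℤ), with ℤ/2ℤ acting by negation, is isomorphic to the amalgamated free product D_∞ *_ℤ D_∞ over the index-2 infinite cyclic subgroups. -/
/-- Relations for the infinite dihedral group D_∞ = ⟨u, v ∣ u² = v² = 1⟩. -/
def dihedralRels : Set (FreeGroup Bool) :=
  {FreeGroup.of true ^ 2, FreeGroup.of false ^ 2}

abbrev InfDihedral : Type := PresentedGroup dihedralRels

/-- The translation uv in D_∞, generating the infinite cyclic translation subgroup. -/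
def dTrans : InfDihedral := PresentedGroup.of true * PresentedGroup.of false

/-- ℤ², written multiplicatively. -/
abbrev Z2 : Type := Multiplicative ℤ × Multiplicative ℤ

/-- The inversion automorphism of ℤ² (negation, written multiplicatively). -/
def negAut2 : MulAut Z2 := MulEquiv.inv Z2

lemma negAut2_sq : negAut2 ^ 2 = 1 := by
  ext x
  · simp [negAut2, pow_two]
  · simp [negAut2, pow_two]

/-- The action of ℤ/2ℤ on ℤ² by negation. -/
def negActionZ2 : Multiplicative (ZMod 2) →* MulAut Z2 where
  toFun x := negAut2 ^ (Multiplicative.toAdd x).val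
  map_one' := by simp
  map_mul' x y := by
    have key : ∀ n : ℕ, negAut2 ^ (n % 2) = negAut2 ^ n := by
      intro n
      conv_rhs => rw [← Nat.div_add_mod n 2]
      rw [pow_add, pow_mul, negAut2_sq, one_pow, one_mul]
    show negAut2 ^ (Multiplicative.toAdd x + Multiplicative.toAdd y).val = _
    rw [ZMod.val_add, key, pow_add]

/-!
In `[p2]` every element `s n` (`s` the half-turn, `n ∈ ℤ²`) is an involution. The half-turns
centred on a horizontal line at two adjacent half-lattice points generate a copy of `D_∞` whose
translation is `x = (1, 0)`; using the lines `y = 0` and `y = -1/2` gives a map from the amalgam.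
Conversely, in the amalgam the mirror `u₀` inverts the common translation `t`, and `u₀ u₁`
commutes with `t`, so `(a, b) ↦ tᵃ (u₀ u₁)ᵇ`, `s ↦ u₀` is a homomorphism from `[p2]`; the two
maps are inverse on generators. For the index: every element of `D_∞` is `tⁿ` or `u tⁿ`, and the
parity character `D_∞ → ℤ/2` vanishes exactly on the former.
-/

open Multiplicative

section ZModHom

variable {M : Type*} [Monoid M]

def zmodPowHom (n : ℕ) [NeZero n] (g : M) (hg : g ^ n = 1) : Multiplicative (ZMod n) →* M where
  toFun x := g ^ (toAdd x).val
  map_one' := by simp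
  map_mul' x y := by simp only [toAdd_mul, ZMod.val_add, ← pow_eq_pow_mod _ hg, pow_add]

lemma zmodPowHom_ofAdd_one {n : ℕ} [NeZero n] [Fact (1 < n)] (g : M) (hg : g ^ n = 1) :
    zmodPowHom n g hg (ofAdd 1) = g := by
  simp [zmodPowHom, ZMod.val_one]

lemma MonoidHom.ext_mzmod {n : ℕ} [NeZero n] {f g : Multiplicative (ZMod n) →* M}
    (h : f (ofAdd 1) = g (ofAdd 1)) : f = g := by
  refine MonoidHom.ext fun x => ?_
  rw [← ofAdd_toAdd x, ← ZMod.natCast_zmod_val (toAdd x), ← nsmul_one, ofAdd_nsmul, map_pow,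
    map_pow, h]

end ZModHom

lemma MonoidHom.prod_ext {M N P : Type*} [MulOneClass M] [MulOneClass N] [Monoid P]
    {f g : M × N →* P} (hl : f.comp (.inl M N) = g.comp (.inl M N))
    (hr : f.comp (.inr M N) = g.comp (.inr M N)) : f = g := by
  ext p
  rw [← Prod.fst_mul_snd p, map_mul, map_mul]
  exact congr_arg₂ (· * ·) (DFunLike.congr_fun hl p.1) (DFunLike.congr_fun hr p.2)

lemma MonoidHom.ext_mint_prod {M : Type*} [Monoid M]
    {f g : Multiplicative ℤ × Multiplicative ℤ →* M} (h₁ : f (ofAdd 1, 1) = g (ofAdd 1, 1))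
    (h₂ : f (1, ofAdd 1) = g (1, ofAdd 1)) : f = g :=
  MonoidHom.prod_ext (MonoidHom.ext_mint h₁) (MonoidHom.ext_mint h₂)

namespace InfDihedral

open PresentedGroup (of)

variable {G : Type*} [Group G]

def lift (a b : G) (ha : a ^ 2 = 1) (hb : b ^ 2 = 1) : InfDihedral →* G :=
  PresentedGroup.toGroup (f := fun i => cond i a b) <| by
    rintro r (rfl | rfl) <;> simpa

@[simp] lemma lift_of_true (a b : G) (ha : a ^ 2 = 1) (hb : b ^ 2 = 1) :
    lift a b ha hb (of true) = a :=
  PresentedGroup.toGroup.of _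

@[simp] lemma lift_of_false (a b : G) (ha : a ^ 2 = 1) (hb : b ^ 2 = 1) :
    lift a b ha hb (of false) = b :=
  PresentedGroup.toGroup.of _

lemma lift_dTrans (a b : G) (ha : a ^ 2 = 1) (hb : b ^ 2 = 1) :
    lift a b ha hb dTrans = a * b := by
  rw [dTrans, map_mul, lift_of_true, lift_of_false]

lemma of_mul_self (i : Bool) : (of i : InfDihedral) * of i = 1 := by
  change PresentedGroup.mk _ (FreeGroup.of i) * PresentedGroup.mk _ (FreeGroup.of i) = 1
  rw [← map_mul, ← sq]
  exact PresentedGroup.one_of_mem <| by cases i <;> simp [dihedralRels]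

lemma of_inv (i : Bool) : (of i : InfDihedral)⁻¹ = of i :=
  inv_eq_of_mul_eq_one_right (of_mul_self i)

lemma of_false_eq : (of false : InfDihedral) = of true * dTrans := by
  rw [dTrans, ← mul_assoc, of_mul_self true, one_mul]

lemma of_true_mul_dTrans : of true * dTrans = dTrans⁻¹ * of true := by
  rw [dTrans, mul_inv_rev, of_inv, of_inv, ← mul_assoc, of_mul_self true, one_mul, mul_assoc,
    of_mul_self true, mul_one]

lemma of_true_mul_dTrans_inv : of true * dTrans⁻¹ = dTrans * of true := by
  rw [(SemiconjBy.inv_right of_true_mul_dTrans : _ = _), inv_inv]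

def parity : InfDihedral →* Multiplicative (ZMod 2) :=
  lift (ofAdd 1) (ofAdd 1) (by decide) (by decide)

lemma parity_dTrans : parity dTrans = 1 := by
  rw [parity, lift_dTrans]
  rfl

lemma exists_eq_zpow_or_eq_of_true_mul_zpow (x : InfDihedral) :
    ∃ n : ℤ, x = dTrans ^ n ∨ x = of true * dTrans ^ n := by
  have step (i : Bool) (y : InfDihedral)
      (hy : ∃ n : ℤ, y = dTrans ^ n ∨ y = of true * dTrans ^ n) :
      ∃ n : ℤ, of i * y = dTrans ^ n ∨ of i * y = of true * dTrans ^ n := by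
    obtain ⟨n, rfl | rfl⟩ := hy <;> cases i
    · exact ⟨1 + n, .inr (by rw [of_false_eq, zpow_add, zpow_one, mul_assoc])⟩
    · exact ⟨n, .inr rfl⟩
    · refine ⟨-1 + n, .inl ?_⟩
      rw [of_false_eq, of_true_mul_dTrans, mul_assoc, ← mul_assoc (of true),
        of_mul_self true, one_mul, ← zpow_neg_one, ← zpow_add]
    · exact ⟨n, .inl (by rw [← mul_assoc, of_mul_self true, one_mul])⟩
  have hx : x ∈ Subgroup.closure (Set.range PresentedGroup.of) :=
    PresentedGroup.closure_range_of _ ▸ Subgroup.mem_top x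
  induction hx using Subgroup.closure_induction_left with
  | one => exact ⟨0, .inl (zpow_zero _).symm⟩
  | mul_left g hg y _ ih => obtain ⟨i, rfl⟩ := hg; exact step i y ih
  | inv_mul_cancel g hg y _ ih => obtain ⟨i, rfl⟩ := hg; rw [of_inv]; exact step i y ih

lemma parity_of_true_mul_zpow_dTrans (n : ℤ) : parity (of true * dTrans ^ n) = ofAdd 1 := by
  rw [map_mul, map_zpow, parity_dTrans, one_zpow, mul_one, parity, lift_of_true]

lemma zpowers_dTrans_eq_ker_parity : Subgroup.zpowers dTrans = parity.ker := by
  refine le_antisymm (Subgroup.zpowers_le.2 parity_dTrans) fun x hx => ?_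
  obtain ⟨n, rfl | rfl⟩ := exists_eq_zpow_or_eq_of_true_mul_zpow x
  · exact Subgroup.zpow_mem_zpowers dTrans n
  · rw [MonoidHom.mem_ker, parity_of_true_mul_zpow_dTrans] at hx
    exact absurd hx (by decide)

lemma parity_surjective : Function.Surjective parity := by
  intro y
  fin_cases y
  · exact ⟨1, map_one _⟩
  · exact ⟨of true, lift_of_true _ _ _ _⟩

lemma index_zpowers_dTrans : (Subgroup.zpowers dTrans).index = 2 := by
  rw [zpowers_dTrans_eq_ker_parity, Subgroup.index_ker, MonoidHom.range_eq_top.2 parity_surjective,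
    Subgroup.card_top, Nat.card_eq_fintype_card]
  rfl

end InfDihedral

abbrev WallpaperP2 : Type := Z2 ⋊[negActionZ2] Multiplicative (ZMod 2)

abbrev DihedralAmalgam : Type := Monoid.PushoutI fun _ : Bool => zpowersHom InfDihedral dTrans

lemma negActionZ2_ofAdd_one_apply (n : Z2) : negActionZ2 (ofAdd 1) n = n⁻¹ := rfl

namespace DihedralAmalgam

open Monoid.PushoutI

def mirror (i : Bool) : DihedralAmalgam := of i (PresentedGroup.of true)

def translation : DihedralAmalgam := base _ (ofAdd 1)

lemma of_dTrans (i : Bool) : (of i dTrans : DihedralAmalgam) = translation := by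
  rw [translation, ← of_apply_eq_base _ i, zpowersHom_apply, toAdd_ofAdd, zpow_one]

lemma mirror_mul_mirror (i : Bool) : mirror i * mirror i = 1 := by
  rw [mirror, ← map_mul, InfDihedral.of_mul_self true, map_one]

lemma mirror_inv (i : Bool) : (mirror i)⁻¹ = mirror i :=
  inv_eq_of_mul_eq_one_right (mirror_mul_mirror i)

lemma of_of_false (i : Bool) :
    (of i (PresentedGroup.of false) : DihedralAmalgam) = mirror i * translation := by
  rw [InfDihedral.of_false_eq, map_mul, of_dTrans, mirror]

lemma mirror_mul_translation (i : Bool) : mirror i * translation = translation⁻¹ * mirror i := by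
  rw [mirror, ← of_dTrans i, ← map_mul, ← map_inv, ← map_mul,
    InfDihedral.of_true_mul_dTrans]

lemma mirror_mul_translation_inv (i : Bool) :
    mirror i * translation⁻¹ = translation * mirror i := by
  rw [mirror, ← of_dTrans i, ← map_inv, ← map_mul, ← map_mul,
    InfDihedral.of_true_mul_dTrans_inv]

lemma commute_translation_mirror_mul_mirror :
    Commute translation (mirror false * mirror true) := by
  rw [Commute, SemiconjBy, ← mul_assoc, ← mirror_mul_translation_inv, mul_assoc,
    ← mirror_mul_translation, mul_assoc]

end DihedralAmalgam

namespace WallpaperP2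

open SemidirectProduct DihedralAmalgam

def rotation : WallpaperP2 := inr (ofAdd 1)

lemma rotation_mul_rotation : rotation * rotation = 1 := by
  rw [rotation, ← map_mul, ← map_one inr]
  rfl

lemma rotation_mul_inl (n : Z2) : rotation * inl n = inl n⁻¹ * rotation := by
  rw [rotation, ← negActionZ2_ofAdd_one_apply, inl_aut, map_inv, inv_mul_cancel_right]

def halfTurn (n : Z2) : WallpaperP2 := rotation * inl n

lemma halfTurn_mul_halfTurn (m n : Z2) : halfTurn m * halfTurn n = inl (m⁻¹ * n) := by
  rw [halfTurn, halfTurn, mul_assoc, ← mul_assoc (inl m), ← inv_inv m, ← rotation_mul_inl,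
    ← mul_assoc, ← mul_assoc, rotation_mul_rotation, one_mul, inv_inv, map_mul]

lemma halfTurn_sq (n : Z2) : halfTurn n ^ 2 = 1 := by
  rw [sq, halfTurn_mul_halfTurn, inv_mul_cancel, map_one]

lemma halfTurn_one : halfTurn 1 = rotation := by
  rw [halfTurn, map_one, mul_one]

def latticeToAmalgam : Z2 →* DihedralAmalgam :=
  (zpowersHom _ translation).noncommCoprod (zpowersHom _ (mirror false * mirror true))
    fun m n => by
      simp only [zpowersHom_apply]
      exact commute_translation_mirror_mul_mirror.zpow_zpow _ _

lemma latticeToAmalgam_fst : latticeToAmalgam (ofAdd 1, 1) = translation := by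
  rw [latticeToAmalgam, MonoidHom.noncommCoprod_apply]
  simp

lemma latticeToAmalgam_snd : latticeToAmalgam (1, ofAdd 1) = mirror false * mirror true := by
  rw [latticeToAmalgam, MonoidHom.noncommCoprod_apply]
  simp

def toAmalgam : WallpaperP2 →* DihedralAmalgam :=
  SemidirectProduct.lift latticeToAmalgam
    (zmodPowHom 2 (mirror false) ((sq _).trans (mirror_mul_mirror false))) fun g => by
      obtain rfl | rfl : g = 1 ∨ g = ofAdd 1 := by revert g; decide
      · exact MonoidHom.ext fun n => by simp
      · refine MonoidHom.ext_mint_prod ?_ ?_ <;>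
          simp only [MonoidHom.comp_apply, MulEquiv.coe_toMonoidHom, MulAut.conj_apply,
            negActionZ2_ofAdd_one_apply, zmodPowHom_ofAdd_one, map_inv]
        · rw [latticeToAmalgam_fst, mirror_inv, mirror_mul_translation, mul_assoc,
            mirror_mul_mirror, mul_one]
        · rw [latticeToAmalgam_snd, mul_inv_rev, mirror_inv, mirror_inv, ← mul_assoc,
            mirror_mul_mirror, one_mul]

lemma toAmalgam_inl (n : Z2) : toAmalgam (inl n) = latticeToAmalgam n :=
  lift_inl _ _ _ n

lemma toAmalgam_rotation : toAmalgam rotation = mirror false :=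
  (lift_inr _ _ _ _).trans (zmodPowHom_ofAdd_one _ _)

lemma toAmalgam_halfTurn (n : Z2) : toAmalgam (halfTurn n) = mirror false * latticeToAmalgam n := by
  rw [halfTurn, map_mul, toAmalgam_rotation, toAmalgam_inl]

def dihedralToP2 (c : Z2) : InfDihedral →* WallpaperP2 :=
  InfDihedral.lift (halfTurn c) (halfTurn (c * (ofAdd 1, 1))) (halfTurn_sq _) (halfTurn_sq _)

lemma dihedralToP2_dTrans (c : Z2) : dihedralToP2 c dTrans = inl (ofAdd 1, 1) := by
  rw [dihedralToP2, InfDihedral.lift_dTrans, halfTurn_mul_halfTurn, inv_mul_cancel_left]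

/-- Copy `i` of `D_∞` goes to the symmetries of the line `y = -i/2`: its two reflections become
the half-turns about `(0, -i/2)` and `(-1/2, -i/2)`. -/
def ofAmalgam : DihedralAmalgam →* WallpaperP2 :=
  Monoid.PushoutI.lift (fun i => dihedralToP2 (cond i (1, ofAdd 1) 1))
    (zpowersHom _ (inl (ofAdd 1, 1))) fun i => MonoidHom.ext_mint <| by
      rw [MonoidHom.comp_apply, zpowersHom_apply, zpowersHom_apply, toAdd_ofAdd, zpow_one, zpow_one,
        dihedralToP2_dTrans]

lemma ofAmalgam_translation : ofAmalgam translation = inl (ofAdd 1, 1) := by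
  rw [translation, ofAmalgam, Monoid.PushoutI.lift_base, zpowersHom_apply, toAdd_ofAdd, zpow_one]

lemma ofAmalgam_mirror (i : Bool) : ofAmalgam (mirror i) = halfTurn (cond i (1, ofAdd 1) 1) := by
  rw [mirror, ofAmalgam, Monoid.PushoutI.lift_of, dihedralToP2, InfDihedral.lift_of_true]

lemma ofAmalgam_comp_toAmalgam : ofAmalgam.comp toAmalgam = MonoidHom.id _ := by
  refine SemidirectProduct.hom_ext (MonoidHom.ext_mint_prod ?_ ?_) (MonoidHom.ext_mzmod ?_)
  · rw [MonoidHom.comp_apply, MonoidHom.comp_apply, toAmalgam_inl, latticeToAmalgam_fst,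
      ofAmalgam_translation, MonoidHom.id_comp]
  · rw [MonoidHom.comp_apply, MonoidHom.comp_apply, toAmalgam_inl, latticeToAmalgam_snd, map_mul,
      ofAmalgam_mirror, ofAmalgam_mirror, halfTurn_mul_halfTurn, cond_false, cond_true, inv_one,
      one_mul, MonoidHom.id_comp]
  · rw [MonoidHom.comp_apply, MonoidHom.comp_apply, MonoidHom.id_comp, ← rotation,
      toAmalgam_rotation, ofAmalgam_mirror, cond_false, halfTurn_one]

lemma toAmalgam_ofAmalgam_mirror (i : Bool) : toAmalgam (ofAmalgam (mirror i)) = mirror i := by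
  rw [ofAmalgam_mirror, toAmalgam_halfTurn]
  cases i
  · rw [cond_false, map_one, mul_one]
  · rw [cond_true, latticeToAmalgam_snd, ← mul_assoc, mirror_mul_mirror, one_mul]

lemma toAmalgam_comp_ofAmalgam : toAmalgam.comp ofAmalgam = MonoidHom.id _ := by
  refine Monoid.PushoutI.hom_ext_nonempty fun i => PresentedGroup.ext fun b => ?_
  simp only [MonoidHom.comp_apply, MonoidHom.id_apply]
  cases b
  · rw [of_of_false, map_mul, map_mul, toAmalgam_ofAmalgam_mirror, ofAmalgam_translation,
      toAmalgam_inl, latticeToAmalgam_fst]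
  · exact toAmalgam_ofAmalgam_mirror i

def mulEquivAmalgam : WallpaperP2 ≃* DihedralAmalgam :=
  toAmalgam.toMulEquiv ofAmalgam ofAmalgam_comp_toAmalgam toAmalgam_comp_ofAmalgam

end WallpaperP2

/-- The wallpaper group [p2] = ℤ² ⋊₋₁ (ℤ/2ℤ) is the amalgamated free product
D_∞ *_ℤ D_∞ over the index-2 infinite cyclic translation subgroups. -/
theorem p2_iso_amalgamatedProduct :
    (Subgroup.zpowers dTrans).index = 2 ∧
    Nonempty ((Z2 ⋊[negActionZ2] Multiplicative (ZMod 2)) ≃*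
      Monoid.PushoutI (fun _ : Bool => zpowersHom InfDihedral dTrans)) :=
  ⟨InfDihedral.index_zpowers_dTrans, ⟨WallpaperP2.mulEquivAmalgam⟩⟩
end
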